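/- Let d ≥ 1 and let G be a non-complete d-regular finite simple graph of order n ≥ d³ − 2d² + 2d + 2. Then G is meagre, i.e., gp(μ(G)) = max{n, 2·α_gp(G)}. -/

import Mathlib

open SimpleGraph

variable {V : Type*}

/-- The Mycielskian of a graph `G`: vertices are `some (Sum.inl v)` (original vertices),
`some (Sum.inr v)` (twin vertices), and `none` (the root `u*`). -/
def Mycielskian (G : SimpleGraph V) : SimpleGraph (Option (V ⊕ V)) :=
  SimpleGraph.fromRel (fun x y =>
    (∃ u v, G.Adj u v ∧ x = some (Sum.inl u) ∧ y = some (Sum.inl v)) ∨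
    (∃ u v, G.Adj u v ∧ x = some (Sum.inl u) ∧ y = some (Sum.inr v)) ∨
    (∃ u, x = some (Sum.inr u) ∧ y = none))

/-- `S` is a general position set: no shortest path between two vertices of `S`
contains a third element of `S`. -/
def IsGPSet (G : SimpleGraph V) (S : Set V) : Prop :=
  ∀ u ∈ S, ∀ v ∈ S, ∀ p : G.Walk u v, p.length = G.dist u v →
    ∀ w ∈ S, w ∈ p.support → w = u ∨ w = v

/-- The general position number of `G`: the maximum cardinality of a general position set. -/
noncomputable def gpNumber (G : SimpleGraph V) [Fintype V] : ℕ :=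
  sSup {k | ∃ S : Set V, IsGPSet G S ∧ S.ncard = k}

/-- A gp-set: a general position set of maximum cardinality. -/
def IsGpSet (G : SimpleGraph V) [Fintype V] (S : Set V) : Prop :=
  IsGPSet G S ∧ S.ncard = gpNumber G

/-- `G` is a `d`-regular graph: every vertex has degree `d`. -/
def IsRegularDeg (G : SimpleGraph V) (d : ℕ) : Prop :=
  ∀ v : V, (G.neighborSet v).ncard = d

/-- The maximum cardinality of a set of vertices of `G` that is simultaneously an
independent set and a general position set of `G`. -/
noncomputable def alphaGpNumber (G : SimpleGraph V) [Fintype V] : ℕ :=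
  sSup {k | ∃ S : Set V, (∀ u ∈ S, ∀ v ∈ S, ¬ G.Adj u v) ∧ IsGPSet G S ∧ S.ncard = k}

/-!
The `n` twins are pairwise at distance 2 through the root, so they form a general position set
of `μ(G)`; and an independent set `I` of a `d`-regular graph sends its `d |I|` edges to at most
`n - |I|` vertices of degree `d`, so `2 α_gp(G) ≤ n`. It remains to bound every general position
set `S` of `μ(G)` by `n`. Distances in `μ(G)` between two originals, or from an original to a twin,
agree with those in `G` as long as they are below 4, resp. 3, since a detour through the root
costs that much. If the root lies in `S`, at most one twin does, and the originals in `S` stay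
within distance 3 of one of them; counting the vertices at distance 2 and 3 in a `d`-regular graph
gives `|S| ≤ d (d - 1)² + d + 2`. If the root is not in `S` and some `t` with `t, t' ∈ S` has a
neighbour `b` with `b' ∈ S`, the same sphere count around `t` applies; otherwise all neighbours of
every such `t` avoid `S`, and double counting gives `|S| ≤ n`.
-/

namespace SimpleGraph

variable {G : SimpleGraph V} {u v : V}

lemma two_le_edist (hne : u ≠ v) (hadj : ¬ G.Adj u v) : 2 ≤ G.edist u v := by
  have : 1 < G.edist u v := by
    rw [← not_le, edist_le_one_iff_adj_or_eq]; tauto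
  exact one_add_one_eq_two (R := ℕ∞) ▸ Order.add_one_le_of_lt this

lemma le_edist_of_forall_walk {k : ℕ∞} (h : ∀ p : G.Walk u v, k ≤ p.length) :
    k ≤ G.edist u v :=
  le_iInf h

lemma Walk.length_eq_dist_of_length_le_edist (p : G.Walk u v)
    (hp : (p.length : ℕ∞) ≤ G.edist u v) : p.length = G.dist u v := by
  rw [← Nat.cast_inj (R := ℕ∞), Reachable.coe_dist_eq_edist ⟨p⟩]
  exact le_antisymm hp (edist_le p)

lemma Walk.support_nodup_of_length_le_edist (p : G.Walk u v)
    (hp : (p.length : ℕ∞) ≤ G.edist u v) : p.support.Nodup :=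
  (p.isPath_of_length_eq_dist (p.length_eq_dist_of_length_le_edist hp)).support_nodup

lemma ncard_le_ncard_mul_of_forall_exists_adj [Finite V] {Y Z : Set V} {c : ℕ}
    (hZ : ∀ z ∈ Z, ∃ y ∈ Y, G.Adj y z) (hc : ∀ y ∈ Y, (G.neighborSet y ∩ Z).ncard ≤ c) :
    Z.ncard ≤ Y.ncard * c := by
  set s := (Set.toFinite Y).toFinset
  calc Z.ncard ≤ (⋃ y ∈ s, G.neighborSet y ∩ Z).ncard := by
        refine Set.ncard_le_ncard (fun z hz => ?_)
        obtain ⟨y, hy, hyz⟩ := hZ z hz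
        exact Set.mem_biUnion (by simpa [s] using hy) ⟨hyz, hz⟩
    _ ≤ ∑ y ∈ s, (G.neighborSet y ∩ Z).ncard := s.set_ncard_biUnion_le _
    _ ≤ s.card • c := Finset.sum_le_card_nsmul _ _ _ fun y hy => hc y (by simpa [s] using hy)
    _ = Y.ncard * c := by rw [smul_eq_mul, Set.ncard_eq_toFinset_card]

def sphere (G : SimpleGraph V) (c : V) (k : ℕ) : Set V := {v | G.edist c v = k}

variable {c : V} {k : ℕ}

@[simp] lemma mem_sphere : v ∈ G.sphere c k ↔ G.edist c v = k := Iff.rfl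

lemma sphere_one : G.sphere c 1 = G.neighborSet c := by
  ext; simp

lemma exists_adj_mem_sphere_of_mem_sphere_succ (hv : v ∈ G.sphere c (k + 1)) :
    ∃ u ∈ G.sphere c k, G.Adj u v := by
  rw [mem_sphere, edist_comm] at hv
  obtain ⟨p, hp⟩ := exists_walk_of_edist_eq_coe hv
  cases p with
  | nil => simp at hp
  | @cons _ u _ h q =>
    have hq : q.length = k := by simpa using hp
    refine ⟨u, le_antisymm ?_ ?_, h.symm⟩
    · rw [edist_comm, ← hq]; exact edist_le q
    · have h3 := G.edist_triangle (u := v) (v := u) (w := c)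
      rw [hv, edist_eq_one_iff_adj.mpr h, edist_comm (u := u), Nat.cast_succ, add_comm 1] at h3
      exact (ENat.add_le_add_iff_right ENat.one_ne_top).mp h3

lemma ncard_le_one_add_sum_ncard_sphere_inter [Finite V] {Z : Set V}
    (hZ : ∀ z ∈ Z, G.edist c z ≤ 3) :
    Z.ncard ≤ 1 + (G.sphere c 1 ∩ Z).ncard + (G.sphere c 2 ∩ Z).ncard +
      (G.sphere c 3 ∩ Z).ncard := by
  have hsub : Z ⊆ {c} ∪ G.sphere c 1 ∩ Z ∪ G.sphere c 2 ∩ Z ∪ G.sphere c 3 ∩ Z := by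
    intro z hz
    have h := hZ z hz
    lift G.edist c z to ℕ using (h.trans_lt (by decide)).ne with e he
    norm_cast at h
    interval_cases e
    · exact .inl (.inl (.inl (edist_eq_zero_iff.mp he.symm).symm))
    all_goals simp [← he, hz]
  have h₁ := Set.ncard_union_le ({c} ∪ G.sphere c 1 ∩ Z ∪ G.sphere c 2 ∩ Z) (G.sphere c 3 ∩ Z)
  have h₂ := Set.ncard_union_le ({c} ∪ G.sphere c 1 ∩ Z) (G.sphere c 2 ∩ Z)
  have h₃ := Set.ncard_union_le {c} (G.sphere c 1 ∩ Z)
  have := Set.ncard_le_ncard hsub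
  rw [Set.ncard_singleton] at h₃
  omega

end SimpleGraph

namespace IsGPSet

variable {G : SimpleGraph V} {S : Set V} {x y a b c : V}

lemma eq_or_eq_of_mem_support (hS : IsGPSet G S) (hx : x ∈ S) (hy : y ∈ S) (p : G.Walk x y)
    (hp : (p.length : ℕ∞) ≤ G.edist x y) {z : V} (hz : z ∈ S) (hzp : z ∈ p.support) :
    z = x ∨ z = y :=
  hS x hx y hy p (p.length_eq_dist_of_length_le_edist hp) z hz hzp

lemma notMem_of_adj_of_adj (hS : IsGPSet G S) (hx : x ∈ S) (hy : y ∈ S)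
    (hxy : 2 ≤ G.edist x y) (h₁ : G.Adj x a) (h₂ : G.Adj a y) : a ∉ S := by
  set p : G.Walk x y := .cons h₁ (.cons h₂ .nil)
  have hp : (p.length : ℕ∞) ≤ G.edist x y := by simpa [p] using hxy
  intro ha
  rcases hS.eq_or_eq_of_mem_support hx hy p hp ha (by simp [p]) with rfl | rfl
  exacts [h₁.ne rfl, h₂.ne rfl]

lemma notMem_of_adj_of_adj_of_adj (hS : IsGPSet G S) (hx : x ∈ S) (hy : y ∈ S)
    (hxy : 3 ≤ G.edist x y) (h₁ : G.Adj x a) (h₂ : G.Adj a b) (h₃ : G.Adj b y) :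
    a ∉ S ∧ b ∉ S := by
  set p : G.Walk x y := .cons h₁ (.cons h₂ (.cons h₃ .nil))
  have hp : (p.length : ℕ∞) ≤ G.edist x y := by simpa [p] using hxy
  have hnodup := p.support_nodup_of_length_le_edist hp
  simp only [p, Walk.support_cons, Walk.support_nil, List.nodup_cons, List.mem_cons,
    List.not_mem_nil] at hnodup
  constructor <;> intro hz <;>
    rcases hS.eq_or_eq_of_mem_support hx hy p hp hz (by simp [p]) with rfl | rfl <;> simp_all

lemma notMem_of_adj_of_adj_of_adj_of_adj (hS : IsGPSet G S) (hx : x ∈ S) (hy : y ∈ S)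
    (hxy : 4 ≤ G.edist x y) (h₁ : G.Adj x a) (h₂ : G.Adj a b) (h₃ : G.Adj b c)
    (h₄ : G.Adj c y) : a ∉ S ∧ b ∉ S ∧ c ∉ S := by
  set p : G.Walk x y := .cons h₁ (.cons h₂ (.cons h₃ (.cons h₄ .nil)))
  have hp : (p.length : ℕ∞) ≤ G.edist x y := by simpa [p] using hxy
  have hnodup := p.support_nodup_of_length_le_edist hp
  simp only [p, Walk.support_cons, Walk.support_nil, List.nodup_cons, List.mem_cons,
    List.not_mem_nil] at hnodup
  refine ⟨fun hz => ?_, fun hz => ?_, fun hz => ?_⟩ <;>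
    rcases hS.eq_or_eq_of_mem_support hx hy p hp hz (by simp [p]) with rfl | rfl <;> simp_all

end IsGPSet


namespace IsRegularDeg

variable {G : SimpleGraph V} {d : ℕ}

lemma exists_adj (hreg : IsRegularDeg G d) (hd : d ≠ 0) (v : V) : ∃ w, G.Adj v w :=
  Set.nonempty_of_ncard_ne_zero (hreg v ▸ hd)

variable [Finite V]

lemma ncard_neighborSet_inter_le (hreg : IsRegularDeg G d) {u w : V} {T : Set V}
    (huw : G.Adj u w) (hw : w ∉ T) : (G.neighborSet u ∩ T).ncard ≤ d - 1 :=
  calc (G.neighborSet u ∩ T).ncard ≤ (G.neighborSet u \ {w}).ncard :=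
        Set.ncard_le_ncard fun z hz => ⟨hz.1, fun h => hw (h ▸ hz.2)⟩
    _ = d - 1 := by
      rw [Set.ncard_sdiff_singleton_of_mem (show w ∈ G.neighborSet u from huw), hreg u]

lemma ncard_le_ncard_of_forall_neighborSet_subset (hreg : IsRegularDeg G d) (hd : d ≠ 0)
    {K W : Set V} (h : ∀ t ∈ K, G.neighborSet t ⊆ W) : K.ncard ≤ W.ncard := by
  classical
  have := Fintype.ofFinite V
  have hcard (t : V) : (G.neighborSet t).toFinset.card = d := by
    rw [← Set.ncard_eq_toFinset_card', hreg t]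
  rw [Set.ncard_eq_toFinset_card', Set.ncard_eq_toFinset_card']
  refine Nat.le_of_mul_le_mul_right (Finset.card_mul_le_card_mul G.Adj (m := d) (n := d)
    (fun t ht => ?_) (fun w _ => ?_)) (Nat.pos_of_ne_zero hd)
  · refine hcard t ▸ Finset.card_le_card fun w hw => ?_
    simp only [Set.mem_toFinset, mem_neighborSet] at ht hw
    exact (Finset.mem_bipartiteAbove G.Adj).mpr ⟨Set.mem_toFinset.mpr (h t ht hw), hw⟩
  · refine hcard w ▸ Finset.card_le_card fun t ht => ?_
    simpa using ((Finset.mem_bipartiteBelow G.Adj).mp ht).2.symm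

lemma ncard_add_ncard_le_card (hreg : IsRegularDeg G d) (hd : d ≠ 0) {K T : Set V}
    (h : ∀ t ∈ K, ∀ w, G.Adj t w → w ∉ T) :
    K.ncard + T.ncard ≤ Nat.card V := by
  set W := {w | ∃ t ∈ K, G.Adj t w}
  have hKW : K.ncard ≤ W.ncard :=
    hreg.ncard_le_ncard_of_forall_neighborSet_subset hd fun t ht w hw => ⟨t, ht, hw⟩
  have hTW : Disjoint T W := Set.disjoint_right.mpr fun w ⟨t, ht, htw⟩ => h t ht w htw
  have := Set.ncard_union_eq hTW ▸ Set.ncard_le_card (T ∪ W)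
  omega

lemma two_mul_ncard_le_card (hreg : IsRegularDeg G d) (hd : d ≠ 0) {S : Set V}
    (hS : ∀ u ∈ S, ∀ v ∈ S, ¬ G.Adj u v) : 2 * S.ncard ≤ Nat.card V := by
  have := hreg.ncard_add_ncard_le_card hd fun t ht w hw hwS => hS t ht w hwS hw
  omega

variable {c u : V} {k : ℕ}

lemma ncard_neighborSet_inter_sphere_le (hreg : IsRegularDeg G d)
    (hu : u ∈ G.sphere c (k + 1)) : (G.neighborSet u ∩ G.sphere c (k + 2)).ncard ≤ d - 1 := by
  obtain ⟨w, hw, hwu⟩ := exists_adj_mem_sphere_of_mem_sphere_succ hu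
  refine hreg.ncard_neighborSet_inter_le hwu.symm fun hw' => ?_
  simp only [mem_sphere] at hw hw'
  exact absurd (hw.symm.trans hw') (by norm_cast; omega)

/-- Each vertex of `Z` is reached from a vertex at distance `k + 1` outside `E`, and each of
those has at most `d - 1` neighbours at distance `k + 2`. -/
lemma ncard_le_ncard_sphere_sdiff_mul (hreg : IsRegularDeg G d) {Z E : Set V}
    (hZ : Z ⊆ G.sphere c (k + 2)) (hE : ∀ z ∈ Z, ∀ u ∈ G.sphere c (k + 1), G.Adj u z → u ∉ E) :
    Z.ncard ≤ (G.sphere c (k + 1) \ E).ncard * (d - 1) := by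
  refine ncard_le_ncard_mul_of_forall_exists_adj (G := G) (fun z hz => ?_) (fun u hu => ?_)
  · obtain ⟨u, hu, huz⟩ := exists_adj_mem_sphere_of_mem_sphere_succ (hZ hz)
    exact ⟨u, ⟨hu, hE z hz u hu huz⟩, huz⟩
  · exact (Set.ncard_le_ncard (Set.inter_subset_inter_right _ hZ)).trans
      (hreg.ncard_neighborSet_inter_sphere_le hu.1)

lemma ncard_sphere_two_le (hreg : IsRegularDeg G d) (c : V) :
    (G.sphere c 2).ncard ≤ d * (d - 1) := by
  simpa [sphere_one, hreg c] using
    hreg.ncard_le_ncard_sphere_sdiff_mul (c := c) (k := 0) (E := ∅) subset_rfl (by simp)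

end IsRegularDeg

namespace Mycielskian

variable {G : SimpleGraph V} {u v x y : V}

abbrev orig (v : V) : Option (V ⊕ V) := some (.inl v)

abbrev twin (v : V) : Option (V ⊕ V) := some (.inr v)

@[simp] lemma adj_orig_orig : (Mycielskian G).Adj (orig u) (orig v) ↔ G.Adj u v := by
  simp only [Mycielskian, fromRel_adj]
  simpa [G.adj_comm] using fun h => h.ne

@[simp] lemma adj_orig_twin : (Mycielskian G).Adj (orig u) (twin v) ↔ G.Adj u v := by
  simp [Mycielskian]

@[simp] lemma adj_twin_orig : (Mycielskian G).Adj (twin u) (orig v) ↔ G.Adj u v := by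
  simp [Mycielskian, G.adj_comm]

@[simp] lemma not_adj_twin_twin : ¬ (Mycielskian G).Adj (twin u) (twin v) := by
  simp [Mycielskian]

@[simp] lemma adj_twin_root : (Mycielskian G).Adj (twin u) none := by
  simp [Mycielskian]

@[simp] lemma adj_root_twin : (Mycielskian G).Adj none (twin u) := by
  simp [Mycielskian]

@[simp] lemma not_adj_orig_root : ¬ (Mycielskian G).Adj (orig u) none := by
  simp [Mycielskian]

@[simp] lemma not_adj_root_orig : ¬ (Mycielskian G).Adj none (orig u) := by
  simp [Mycielskian]

lemma le_edist_orig_orig {k : ℕ∞} (hk : k ≤ 4) (h : k ≤ G.edist x y) :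
    k ≤ (Mycielskian G).edist (orig x) (orig y) := by
  refine le_edist_of_forall_walk fun q => ?_
  rcases q with _ | @⟨_, a, _, h₁, _ | @⟨_, b, _, h₂, _ | @⟨_, c, _, h₃, _ | ⟨h₄, q⟩⟩⟩⟩
  · simpa using h
  · exact h.trans ((edist_le (adj_orig_orig.mp h₁).toWalk).trans (by simp))
  · rcases a with _ | a | a <;> simp at h₁ h₂
    all_goals exact h.trans ((edist_le (.cons h₁ (.cons h₂ .nil))).trans (by simp))
  · rcases a with _ | a | a <;> rcases b with _ | b | b <;> simp at h₁ h₂ h₃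
    all_goals exact h.trans ((edist_le (.cons h₁ (.cons h₂ (.cons h₃ .nil)))).trans (by simp))
  · exact hk.trans (by simp; norm_cast; omega)

lemma le_edist_orig_twin {k : ℕ∞} (hk : k ≤ 3) (h : k ≤ G.edist x y) :
    k ≤ (Mycielskian G).edist (orig x) (twin y) := by
  refine le_edist_of_forall_walk fun q => ?_
  rcases q with _ | @⟨_, a, _, h₁, _ | @⟨_, b, _, h₂, _ | ⟨h₃, q⟩⟩⟩
  · exact h.trans ((edist_le (adj_orig_twin.mp h₁).toWalk).trans (by simp))
  · rcases a with _ | a | a <;> simp at h₁ h₂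
    exact h.trans ((edist_le (.cons h₁ (.cons h₂ .nil))).trans (by simp))
  · exact hk.trans (by simp; norm_cast; omega)

lemma isGPSet_range_twin : IsGPSet (Mycielskian G) (Set.range twin) := by
  rintro _ ⟨x, rfl⟩ _ ⟨y, rfl⟩ p hp _ ⟨z, rfl⟩ hz
  have hlen : p.length ≤ 2 :=
    hp ▸ dist_le (.cons (adj_twin_root (G := G) (u := x)) (.cons adj_root_twin .nil))
  rcases p with _ | @⟨_, a, _, h₁, _ | ⟨h₂, _ | ⟨h₃, q⟩⟩⟩
  · simp_all
  · simp at h₁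
  · rcases a with _ | a | a
    · simp_all
    · simp_all
    · simp at h₁
  · simp at hlen

lemma ncard_eq (S : Set (Option (V ⊕ V))) [Finite V] :
    S.ncard = (orig ⁻¹' S).ncard + (twin ⁻¹' S).ncard + (S ∩ {none}).ncard := by
  have hS : S = orig '' (orig ⁻¹' S) ∪ twin '' (twin ⁻¹' S) ∪ (S ∩ {none}) := by
    ext (_ | _ | _) <;> simp
  have h₁ : Disjoint (orig '' (orig ⁻¹' S)) (twin '' (twin ⁻¹' S)) := by
    simp [Set.disjoint_left]
  have h₂ : Disjoint (orig '' (orig ⁻¹' S) ∪ twin '' (twin ⁻¹' S)) (S ∩ {none}) :=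
    Set.disjoint_left.mpr (by rintro _ (⟨_, _, rfl⟩ | ⟨_, _, rfl⟩) ⟨_, h⟩ <;> simp at h)
  conv_lhs => rw [hS]
  rw [Set.ncard_union_eq h₂, Set.ncard_union_eq h₁,
    Set.ncard_image_of_injective _ fun _ _ h => by simpa using h,
    Set.ncard_image_of_injective _ fun _ _ h => by simpa using h]

end Mycielskian

lemma Nat.add_mul_pred_le {d q p : ℕ} (h : q + p ≤ d * (d - 1)) :
    q + p * (d - 1) ≤ d * (d - 1) ^ 2 := by
  rcases d with _ | _ | d
  · simp_all
  · simp_all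
  · simp only [Nat.add_sub_cancel] at h ⊢
    nlinarith

lemma Nat.add_add_mul_pred_le {d m q p : ℕ} (hd : d ≠ 0) (hqm : q ≤ m) (hq : q ≤ (d - 1) ^ 2)
    (h : m + p ≤ d * (d - 1)) : m + q + p * (d - 1) + 1 ≤ d * (d - 1) ^ 2 + d := by
  rcases d with _ | _ | _ | d
  · contradiction
  · simp_all
  · simp_all; omega
  · simp only [Nat.add_sub_cancel] at hq h ⊢
    have : m + q ≤ m * (d + 2) := by nlinarith
    nlinarith [Nat.mul_le_mul_right (d + 2) h]

namespace Mycielskian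

variable {G : SimpleGraph V} {d : ℕ} {S : Set (Option (V ⊕ V))}

lemma orig_notMem_of_adj (hS : IsGPSet (Mycielskian G) S) {t w : V} (ht : orig t ∈ S)
    (ht' : twin t ∈ S) (htw : G.Adj t w) : orig w ∉ S :=
  hS.notMem_of_adj_of_adj ht ht' (two_le_edist (by simp) (by simp)) (adj_orig_orig.mpr htw)
    (adj_orig_twin.mpr htw.symm)

variable [Finite V]

lemma ncard_orig_preimage_le_of_root_mem (hreg : IsRegularDeg G d) (hd : d ≠ 0)
    (hS : IsGPSet (Mycielskian G) S) (hroot : none ∈ S) :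
    (orig ⁻¹' S).ncard ≤ d * (d - 1) ^ 2 + d + 1 := by
  set A := orig ⁻¹' S
  rcases A.eq_empty_or_nonempty with hA | ⟨a₀, ha₀⟩
  · simp [hA]
  have hfar : ∀ a ∈ A, G.edist a₀ a ≤ 3 := by
    intro a ha
    by_contra! h
    obtain ⟨x, hx⟩ := hreg.exists_adj hd a₀
    obtain ⟨y, hy⟩ := hreg.exists_adj hd a
    exact (hS.notMem_of_adj_of_adj_of_adj_of_adj ha₀ ha
      (le_edist_orig_orig le_rfl (Order.add_one_le_of_lt h)) (adj_orig_twin.mpr hx)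
      adj_twin_root adj_root_twin (adj_twin_orig.mpr hy.symm)).2.1 hroot
  have hE : ∀ a ∈ G.sphere a₀ 3 ∩ A, ∀ y ∈ G.sphere a₀ 2, G.Adj y a → y ∉ A := by
    rintro a ⟨ha₃, ha⟩ y hy hya
    obtain ⟨x, hx, hxy⟩ := exists_adj_mem_sphere_of_mem_sphere_succ hy
    rw [sphere_one] at hx
    exact (hS.notMem_of_adj_of_adj_of_adj ha₀ ha (le_edist_orig_orig (by norm_num) ha₃.ge)
      (adj_orig_orig.mpr hx) (adj_orig_orig.mpr hxy) (adj_orig_orig.mpr hya)).2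
  have h₁ : (G.sphere a₀ 1 ∩ A).ncard ≤ d :=
    hreg a₀ ▸ sphere_one (G := G) ▸ Set.ncard_le_ncard Set.inter_subset_left
  have h₃ : (G.sphere a₀ 3 ∩ A).ncard ≤ (G.sphere a₀ 2 \ A).ncard * (d - 1) :=
    hreg.ncard_le_ncard_sphere_sdiff_mul Set.inter_subset_left hE
  have := Nat.add_mul_pred_le <|
    (Set.ncard_inter_add_ncard_sdiff_eq_ncard _ A).trans_le (hreg.ncard_sphere_two_le a₀)
  have := ncard_le_one_add_sum_ncard_sphere_inter hfar
  omega

lemma ncard_orig_preimage_le_of_root_mem_of_twin_mem (hreg : IsRegularDeg G d) (hd : d ≠ 0)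
    (hS : IsGPSet (Mycielskian G) S) (hroot : none ∈ S) {v : V} (hv : twin v ∈ S) :
    (orig ⁻¹' S).ncard ≤ d * (d - 1) + 1 := by
  set A := orig ⁻¹' S
  have hnear : ∀ a ∈ A, G.edist v a ≤ 2 := by
    intro a ha
    by_contra! h
    obtain ⟨w, hw⟩ := hreg.exists_adj hd a
    exact (hS.notMem_of_adj_of_adj_of_adj ha hv
      (le_edist_orig_twin le_rfl (edist_comm (G := G) ▸ Order.add_one_le_of_lt h))
      (adj_orig_twin.mpr hw) adj_twin_root adj_root_twin).2 hroot
  have h₁ : G.sphere v 1 ∩ A = ∅ := by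
    refine Set.eq_empty_of_forall_notMem fun a ⟨hva, ha⟩ => ?_
    rw [sphere_one] at hva
    exact hS.notMem_of_adj_of_adj ha hroot (two_le_edist (by simp) (by simp))
      (adj_orig_twin.mpr hva.symm) adj_twin_root hv
  have h₃ : G.sphere v 3 ∩ A = ∅ :=
    Set.eq_empty_of_forall_notMem fun a ⟨hva, ha⟩ => by
      have := hnear a ha
      rw [mem_sphere.mp hva] at this
      norm_num at this
  have h₂ : (G.sphere v 2 ∩ A).ncard ≤ d * (d - 1) :=
    (Set.ncard_le_ncard Set.inter_subset_left).trans (hreg.ncard_sphere_two_le v)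
  have := ncard_le_one_add_sum_ncard_sphere_inter fun a ha => (hnear a ha).trans (by norm_num)
  simp only [h₁, h₃, Set.ncard_empty] at this
  omega

lemma ncard_le_of_root_mem (hreg : IsRegularDeg G d) (hd : d ≠ 0)
    (hS : IsGPSet (Mycielskian G) S) (hroot : none ∈ S) :
    S.ncard ≤ d * (d - 1) ^ 2 + d + 2 := by
  have hB : (twin ⁻¹' S).Subsingleton := fun x hx y hy => by
    by_contra hxy
    exact hS.notMem_of_adj_of_adj hx hy (two_le_edist (by simpa using hxy) (by simp))
      adj_twin_root adj_root_twin hroot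
  rw [ncard_eq, Set.inter_singleton_of_mem hroot, Set.ncard_singleton]
  rcases hB.eq_empty_or_singleton with hB | ⟨v, hB⟩
  · have := ncard_orig_preimage_le_of_root_mem hreg hd hS hroot
    simp only [hB, Set.ncard_empty]
    omega
  · have := ncard_orig_preimage_le_of_root_mem_of_twin_mem hreg hd hS hroot
      (show v ∈ twin ⁻¹' S from hB ▸ rfl)
    have := Nat.mul_le_mul_left d (Nat.le_self_pow two_ne_zero (d - 1))
    simp only [hB, Set.ncard_singleton]
    omega

lemma ncard_le_card_of_forall_twin_notMem (hreg : IsRegularDeg G d) (hd : d ≠ 0)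
    (hS : IsGPSet (Mycielskian G) S) (hroot : none ∉ S)
    (h : ∀ t, orig t ∈ S → twin t ∈ S → ∀ b, G.Adj t b → twin b ∉ S) :
    S.ncard ≤ Nat.card V := by
  have := hreg.ncard_add_ncard_le_card hd (K := orig ⁻¹' S ∩ twin ⁻¹' S)
    (T := orig ⁻¹' S ∪ twin ⁻¹' S) fun t ⟨ht, ht'⟩ w htw hw =>
      hw.elim (orig_notMem_of_adj hS ht ht' htw) (h t ht ht' w htw)
  have := Set.ncard_union_add_ncard_inter (orig ⁻¹' S) (twin ⁻¹' S)
  rw [ncard_eq, Set.inter_singleton_eq_empty.mpr hroot, Set.ncard_empty]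
  omega

section AdjacentTwins

variable (hreg : IsRegularDeg G d) (hd : d ≠ 0) (hS : IsGPSet (Mycielskian G) S) {t b : V}
  (ht : orig t ∈ S) (ht' : twin t ∈ S) (htb : G.Adj t b) (hb : twin b ∈ S)
include hreg hS ht htb hb

omit hreg in
lemma ncard_twin_preimage_le_of_adj_twin_mem :
    (twin ⁻¹' S).ncard ≤ 2 + (G.sphere t 2 ∩ twin ⁻¹' S).ncard := by
  set B := twin ⁻¹' S
  have hnear : ∀ c ∈ B, G.edist t c ≤ 2 := by
    intro c hc
    by_contra! h
    exact (hS.notMem_of_adj_of_adj_of_adj ht hc (le_edist_orig_twin le_rfl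
      (Order.add_one_le_of_lt h)) (adj_orig_twin.mpr htb) adj_twin_root adj_root_twin).1 hb
  have h₁ : G.sphere t 1 ∩ B ⊆ {b} := by
    rintro c ⟨htc, hc⟩
    rw [sphere_one] at htc
    by_contra hbc
    exact hS.notMem_of_adj_of_adj hb hc (two_le_edist (by simpa [eq_comm] using hbc) (by simp))
      (adj_twin_orig.mpr htb.symm) (adj_orig_twin.mpr htc) ht
  have h₃ : G.sphere t 3 ∩ B = ∅ :=
    Set.eq_empty_of_forall_notMem fun c ⟨htc, hc⟩ => by
      have := hnear c hc
      rw [mem_sphere.mp htc] at this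
      norm_num at this
  have := ncard_le_one_add_sum_ncard_sphere_inter fun c hc => (hnear c hc).trans (by norm_num)
  have := Set.ncard_le_ncard h₁
  simp only [h₃, Set.ncard_empty, Set.ncard_singleton] at *
  omega

include hd ht' in
lemma ncard_orig_preimage_le_of_adj_twin_mem :
    (orig ⁻¹' S).ncard ≤ 1 + (G.sphere t 2 ∩ orig ⁻¹' S).ncard +
      (G.sphere t 2 \ (orig ⁻¹' S ∪ twin ⁻¹' S)).ncard * (d - 1) := by
  set A := orig ⁻¹' S
  have hfar : ∀ a ∈ A, G.edist t a ≤ 3 := by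
    intro a ha
    by_contra! h
    obtain ⟨y, hy⟩ := hreg.exists_adj hd a
    exact (hS.notMem_of_adj_of_adj_of_adj_of_adj ht ha
      (le_edist_orig_orig le_rfl (Order.add_one_le_of_lt h)) (adj_orig_twin.mpr htb)
      adj_twin_root adj_root_twin (adj_twin_orig.mpr hy.symm)).1 hb
  have h₁ : G.sphere t 1 ∩ A = ∅ :=
    Set.eq_empty_of_forall_notMem fun w ⟨htw, hw⟩ => by
      rw [sphere_one] at htw
      exact orig_notMem_of_adj hS ht ht' htw hw
  have hE : ∀ a ∈ G.sphere t 3 ∩ A, ∀ y ∈ G.sphere t 2, G.Adj y a → y ∉ A ∪ twin ⁻¹' S := by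
    rintro a ⟨ha₃, ha⟩ y hy hya hy'
    obtain ⟨x, hx, hxy⟩ := exists_adj_mem_sphere_of_mem_sphere_succ hy
    rw [sphere_one] at hx
    have hta : 3 ≤ (Mycielskian G).edist (orig t) (orig a) :=
      le_edist_orig_orig (by norm_num) ha₃.ge
    rcases hy' with hy' | hy'
    · exact (hS.notMem_of_adj_of_adj_of_adj ht ha hta (adj_orig_orig.mpr hx)
        (adj_orig_orig.mpr hxy) (adj_orig_orig.mpr hya)).2 hy'
    · exact (hS.notMem_of_adj_of_adj_of_adj ht ha hta (adj_orig_orig.mpr hx)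
        (adj_orig_twin.mpr hxy) (adj_twin_orig.mpr hya)).2 hy'
  have h₃ : (G.sphere t 3 ∩ A).ncard ≤ (G.sphere t 2 \ (A ∪ twin ⁻¹' S)).ncard * (d - 1) :=
    hreg.ncard_le_ncard_sphere_sdiff_mul Set.inter_subset_left hE
  have := ncard_le_one_add_sum_ncard_sphere_inter hfar
  simp only [h₁, Set.ncard_empty] at this
  omega

lemma ncard_sphere_two_inter_orig_preimage_le_of_adj_twin_mem :
    (G.sphere t 2 ∩ orig ⁻¹' S).ncard ≤ (d - 1) ^ 2 := by
  have hE : ∀ a ∈ G.sphere t 2 ∩ orig ⁻¹' S, ∀ u ∈ G.sphere t 1, G.Adj u a →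
      u ∉ ({b} : Set V) := by
    rintro a ⟨ha₂, ha⟩ u - hua rfl
    exact hS.notMem_of_adj_of_adj ht ha (le_edist_orig_orig (by norm_num) ha₂.ge)
      (adj_orig_twin.mpr htb) (adj_twin_orig.mpr hua) hb
  have := hreg.ncard_le_ncard_sphere_sdiff_mul (k := 0) Set.inter_subset_left hE
  rwa [sphere_one, Set.ncard_sdiff_singleton_of_mem (show b ∈ G.neighborSet t from htb), hreg t,
    ← sq] at this

end AdjacentTwins

lemma ncard_le_card_of_root_notMem (hreg : IsRegularDeg G d) (hd : d ≠ 0)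
    (hn : d * (d - 1) ^ 2 + d + 2 ≤ Nat.card V) (hS : IsGPSet (Mycielskian G) S)
    (hroot : none ∉ S) : S.ncard ≤ Nat.card V := by
  rcases em (∃ t b, orig t ∈ S ∧ twin t ∈ S ∧ G.Adj t b ∧ twin b ∈ S) with
    ⟨t, b, ht, ht', htb, hb⟩ | h
  swap
  · exact ncard_le_card_of_forall_twin_notMem hreg hd hS hroot
      fun t ht ht' b htb hb => h ⟨t, b, ht, ht', htb, hb⟩
  rw [ncard_eq, Set.inter_singleton_eq_empty.mpr hroot, Set.ncard_empty]
  have hA := ncard_orig_preimage_le_of_adj_twin_mem hreg hd hS ht ht' htb hb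
  have hB := ncard_twin_preimage_le_of_adj_twin_mem hS ht htb hb
  have hA₂ := ncard_sphere_two_inter_orig_preimage_le_of_adj_twin_mem hreg hS ht htb hb
  set A := orig ⁻¹' S
  set B := twin ⁻¹' S
  have hAB : (G.sphere t 2 ∩ A).ncard ≤ (G.sphere t 2 ∩ (A ∪ B)).ncard :=
    Set.ncard_le_ncard (Set.inter_subset_inter_right _ Set.subset_union_left)
  have hBA : (G.sphere t 2 ∩ B).ncard ≤ (G.sphere t 2 ∩ (A ∪ B)).ncard :=
    Set.ncard_le_ncard (Set.inter_subset_inter_right _ Set.subset_union_right)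
  have := Nat.add_add_mul_pred_le hd hAB hA₂ <|
    (Set.ncard_inter_add_ncard_sdiff_eq_ncard _ _).trans_le (hreg.ncard_sphere_two_le t)
  omega

lemma ncard_le_card_of_isGPSet (hreg : IsRegularDeg G d) (hd : d ≠ 0)
    (hn : d * (d - 1) ^ 2 + d + 2 ≤ Nat.card V) (hS : IsGPSet (Mycielskian G) S) :
    S.ncard ≤ Nat.card V := by
  by_cases hroot : none ∈ S
  · exact (ncard_le_of_root_mem hreg hd hS hroot).trans hn
  · exact ncard_le_card_of_root_notMem hreg hd hn hS hroot

lemma gpNumber_eq_card [Fintype V] (hreg : IsRegularDeg G d) (hd : d ≠ 0)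
    (hn : d * (d - 1) ^ 2 + d + 2 ≤ Nat.card V) :
    gpNumber (Mycielskian G) = Fintype.card V := by
  refine IsGreatest.csSup_eq ⟨⟨_, isGPSet_range_twin, ?_⟩, ?_⟩
  · rw [Set.ncard_range_of_injective fun _ _ h => by simpa using h, Nat.card_eq_fintype_card]
  · rintro _ ⟨S, hS, rfl⟩
    exact Nat.card_eq_fintype_card (α := V) ▸ ncard_le_card_of_isGPSet hreg hd hn hS

end Mycielskian

lemma IsRegularDeg.two_mul_alphaGpNumber_le_card [Fintype V] {G : SimpleGraph V} {d : ℕ}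
    (hreg : IsRegularDeg G d) (hd : d ≠ 0) : 2 * alphaGpNumber G ≤ Fintype.card V := by
  suffices alphaGpNumber G ≤ Fintype.card V / 2 by omega
  refine csSup_le' ?_
  rintro _ ⟨S, hS, -, rfl⟩
  have := Nat.card_eq_fintype_card (α := V) ▸ hreg.two_mul_ncard_le_card hd hS
  omega

theorem regular_large_order_meagre_general [Fintype V] (G : SimpleGraph V) {d : ℕ}
    (hd : 1 ≤ d) (hreg : IsRegularDeg G d)
    (hn : (d : ℤ) ^ 3 - 2 * d ^ 2 + 2 * d + 2 ≤ (Fintype.card V : ℤ)) :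
    gpNumber (Mycielskian G) = max (Fintype.card V) (2 * alphaGpNumber G) := by
  have hd₀ : d ≠ 0 := by omega
  have hn' : d * (d - 1) ^ 2 + d + 2 ≤ Nat.card V := by
    rw [Nat.card_eq_fintype_card]
    zify [hd]
    linarith
  rw [Mycielskian.gpNumber_eq_card hreg hd₀ hn',
    max_eq_left (hreg.two_mul_alphaGpNumber_le_card hd₀)]

/-- Any non-complete `d`-regular graph (`d ≥ 1`) of order
`n ≥ d³ - 2d² + 2d + 2` is meagre, i.e. `gp(μ(G)) = max {n, 2 α_gp(G)}`. -/
theorem regular_large_order_meagre [Fintype V] (G : SimpleGraph V) {d : ℕ}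
    (hd : 1 ≤ d) (hne : G ≠ ⊤) (hreg : IsRegularDeg G d)
    (hn : (d : ℤ) ^ 3 - 2 * d ^ 2 + 2 * d + 2 ≤ (Fintype.card V : ℤ)) :
    gpNumber (Mycielskian G) = max (Fintype.card V) (2 * alphaGpNumber G) :=
  regular_large_order_meagre_general G hd hreg hn
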